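/- arXiv:0906.3309 — 3 statements merged into one kernel-verified Lean document; each statement's English description precedes it below -/
import Mathlib

section
/- Let g be a (possibly incomplete) conformal Riemannian metric on the unit disc whose Gauss curvature is bounded above by −C for some C > 0, and let H be the complete conformal metric of constant curvature −C on the disc. Then g ≤ H. -/
noncomputable def lap (u : ℂ → ℝ) (z : ℂ) : ℝ :=
  deriv (fun r : ℝ => deriv (fun rr : ℝ => u ⟨rr, z.im⟩) r) z.re +
  deriv (fun s : ℝ => deriv (fun ss : ℝ => u ⟨z.re, ss⟩) s) z.im

noncomputable def gauss (u : ℂ → ℝ) (z : ℂ) : ℝ :=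
  -Real.exp (-2 * u z) * lap u z


open Filter Topology

lemma second_deriv_nonpos_of_localMax {f : ℝ → ℝ} {s : Set ℝ} (hs : IsOpen s) {x : ℝ}
    (hx : x ∈ s) (hf : ContDiffOn ℝ 2 f s) (hmax : IsLocalMax f x) :
    deriv (deriv f) x ≤ 0 := by
  by_contra hpos
  push_neg at hpos
  have hfd : ∀ y ∈ s, DifferentiableAt ℝ f y := fun y hy =>
    (hf.differentiableOn (by norm_num)).differentiableAt (hs.mem_nhds hy)
  have hg : ContDiffOn ℝ 1 (deriv f) s := hf.deriv_of_isOpen hs (by norm_num)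
  have hgd : DifferentiableAt ℝ (deriv f) x :=
    (hg.differentiableOn (by norm_num)).differentiableAt (hs.mem_nhds hx)
  have hgx : deriv f x = 0 := hmax.deriv_eq_zero
  have hslope : Tendsto (slope (deriv f) x) (𝓝[≠] x) (𝓝 (deriv (deriv f) x)) :=
    hasDerivAt_iff_tendsto_slope.1 hgd.hasDerivAt
  have hev : ∀ᶠ y in 𝓝[>] x, 0 < deriv f y := by
    have : ∀ᶠ y in 𝓝[>] x, 0 < slope (deriv f) x y :=
      (hslope.mono_left (nhdsWithin_mono x fun y hy => ne_of_gt hy)).eventually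
        (eventually_gt_nhds hpos)
    filter_upwards [this, self_mem_nhdsWithin] with y hy hy'
    rw [slope_def_field] at hy
    have hyx : 0 < y - x := sub_pos.2 hy'
    rcases div_pos_iff.mp hy with ⟨h1, _⟩ | ⟨_, h2⟩
    · linarith
    · linarith
  -- get a right interval where deriv f > 0, inside s, inside max nbhd
  have hmem : ∀ᶠ y in 𝓝[>] x, (0 < deriv f y ∧ y ∈ s) ∧ f y ≤ f x := by
    filter_upwards [hev, nhdsWithin_le_nhds (hs.mem_nhds hx),
      nhdsWithin_le_nhds (hmax : ∀ᶠ y in 𝓝 x, f y ≤ f x)] with y h1 h2 h3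
    exact ⟨⟨h1, h2⟩, h3⟩
  rw [eventually_nhdsWithin_iff] at hmem
  rcases Metric.eventually_nhds_iff_ball.mp hmem with ⟨δ, hδ, hδ'⟩
  set b := x + δ/2 with hb
  have hxb : x < b := by rw [hb]; linarith
  have hsub : Set.Icc x b ⊆ Metric.ball x δ ∪ {x} := by
    intro y hy
    rcases eq_or_lt_of_le hy.1 with h | h
    · right; simp [h.symm]
    · left
      rw [Metric.mem_ball, Real.dist_eq, abs_lt]
      constructor <;> [linarith [hy.1]; skip]
      have := hy.2; rw [hb] at this; linarith
  have hprop : ∀ y ∈ Set.Icc x b, y ≠ x → 0 < deriv f y ∧ y ∈ s ∧ f y ≤ f x := by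
    intro y hy hyx
    rcases hsub hy with h | h
    · have hgt : y ∈ Set.Ioi x := lt_of_le_of_ne hy.1 (Ne.symm hyx)
      exact ⟨(hδ' y h hgt).1.1, (hδ' y h hgt).1.2, (hδ' y h hgt).2⟩
    · exact absurd (Set.mem_singleton_iff.mp h) hyx
  have hcont : ContinuousOn f (Set.Icc x b) := by
    intro y hy
    rcases eq_or_ne y x with h | h
    · exact ((hfd y (h ▸ hx)).continuousAt).continuousWithinAt
    · exact ((hfd y (hprop y hy h).2.1).continuousAt).continuousWithinAt
  have hmono : StrictMonoOn f (Set.Icc x b) := by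
    apply strictMonoOn_of_deriv_pos (convex_Icc x b) hcont
    intro y hy
    rw [interior_Icc] at hy
    exact (hprop y ⟨hy.1.le, hy.2.le⟩ (ne_of_gt hy.1)).1
  have h1 : f x < f b := hmono (Set.left_mem_Icc.2 hxb.le) (Set.right_mem_Icc.2 hxb.le) hxb
  have h2 : f b ≤ f x := (hprop b (Set.right_mem_Icc.2 hxb.le) (ne_of_gt hxb)).2.2
  linarith

lemma deriv2_add {f g : ℝ → ℝ} {s : Set ℝ} (hs : IsOpen s) {x : ℝ} (hx : x ∈ s)
    (hf : ContDiffOn ℝ 2 f s) (hg : ContDiffOn ℝ 2 g s) :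
    deriv (deriv (fun t => f t + g t)) x = deriv (deriv f) x + deriv (deriv g) x := by
  have hfd : ∀ y ∈ s, DifferentiableAt ℝ f y := fun y hy =>
    (hf.differentiableOn (by norm_num)).differentiableAt (hs.mem_nhds hy)
  have hgd : ∀ y ∈ s, DifferentiableAt ℝ g y := fun y hy =>
    (hg.differentiableOn (by norm_num)).differentiableAt (hs.mem_nhds hy)
  have e : deriv (fun t => f t + g t) =ᶠ[nhds x] fun t => deriv f t + deriv g t := by
    filter_upwards [hs.mem_nhds hx] with y hy
    exact deriv_add (hfd y hy) (hgd y hy)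
  rw [e.deriv_eq]
  have hf1 : DifferentiableAt ℝ (deriv f) x :=
    ((hf.deriv_of_isOpen (m := 1) hs (by norm_num)).differentiableOn (by norm_num)).differentiableAt
      (hs.mem_nhds hx)
  have hg1 : DifferentiableAt ℝ (deriv g) x :=
    ((hg.deriv_of_isOpen (m := 1) hs (by norm_num)).differentiableOn (by norm_num)).differentiableAt
      (hs.mem_nhds hx)
  exact deriv_add hf1 hg1

lemma deriv2_const_mul (c : ℝ) {f : ℝ → ℝ} {s : Set ℝ} (hs : IsOpen s) {x : ℝ} (hx : x ∈ s)
    (hf : ContDiffOn ℝ 2 f s) :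
    deriv (deriv (fun t => c * f t)) x = c * deriv (deriv f) x := by
  have hfd : ∀ y ∈ s, DifferentiableAt ℝ f y := fun y hy =>
    (hf.differentiableOn (by norm_num)).differentiableAt (hs.mem_nhds hy)
  have e : deriv (fun t => c * f t) =ᶠ[nhds x] fun t => c * deriv f t := by
    filter_upwards [hs.mem_nhds hx] with y hy
    exact deriv_const_mul c (hfd y hy)
  rw [e.deriv_eq]
  have hf1 : DifferentiableAt ℝ (deriv f) x :=
    ((hf.deriv_of_isOpen (m := 1) hs (by norm_num)).differentiableOn (by norm_num)).differentiableAt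
      (hs.mem_nhds hx)
  exact deriv_const_mul c hf1

lemma deriv2_logpart (r b a : ℝ) (hpos : 0 < r^2 - a^2 - b^2) :
    deriv (deriv (fun t : ℝ => Real.log (r^2 - t^2 - b^2))) a
      = (-2*(r^2 - a^2 - b^2) - 4*a^2) / (r^2 - a^2 - b^2)^2 := by
  set S : Set ℝ := {t | 0 < r^2 - t^2 - b^2} with hS
  have hSopen : IsOpen S := by
    have : Continuous fun t : ℝ => r^2 - t^2 - b^2 := by continuity
    exact isOpen_lt continuous_const this
  have haS : a ∈ S := hpos
  have hinner : ∀ t : ℝ, HasDerivAt (fun t : ℝ => r^2 - t^2 - b^2) (-(2*t)) t := by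
    intro t
    have h := ((hasDerivAt_pow 2 t).const_sub (r^2)).sub_const (b^2)
    simpa using h.congr_deriv (by ring)
  have hd1 : ∀ t ∈ S, HasDerivAt (fun t : ℝ => Real.log (r^2 - t^2 - b^2))
      (-(2*t) / (r^2 - t^2 - b^2)) t := fun t ht => (hinner t).log (ne_of_gt ht)
  have e : deriv (fun t : ℝ => Real.log (r^2 - t^2 - b^2)) =ᶠ[nhds a]
      fun t => -(2*t) / (r^2 - t^2 - b^2) := by
    filter_upwards [hSopen.mem_nhds haS] with t ht
    exact (hd1 t ht).deriv
  rw [e.deriv_eq]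
  have hnum : HasDerivAt (fun t : ℝ => -(2*t)) (-2) a := by
    exact (((hasDerivAt_id' a).const_mul 2).neg).congr_deriv (by ring)
  have hdiv := hnum.div (hinner a) (ne_of_gt hpos)
  rw [(show HasDerivAt (fun t : ℝ => -(2*t) / (r^2 - t^2 - b^2)) _ a from hdiv).deriv]
  field_simp
  ring


lemma normsq' (z : ℂ) : ‖z‖^2 = z.re^2 + z.im^2 := by
  rw [Complex.sq_norm, Complex.normSq_apply]; ring

lemma mem_ball_pos {r t b : ℝ} (h : (⟨t, b⟩ : ℂ) ∈ Metric.ball (0:ℂ) r) :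
    0 < r^2 - t^2 - b^2 := by
  rw [mem_ball_zero_iff] at h
  have h2 : ‖(⟨t, b⟩:ℂ)‖^2 < r^2 := by
    apply pow_lt_pow_left₀ h (norm_nonneg _) (by norm_num)
  rw [normsq'] at h2
  have : (⟨t, b⟩ : ℂ).re = t := rfl
  have : (⟨t, b⟩ : ℂ).im = b := rfl
  change t^2 + b^2 < r^2 at h2
  linarith

lemma key (C : ℝ) (hC : 0 < C) (u : ℂ → ℝ)
    (hu : ContDiffOn ℝ (⊤ : ℕ∞) u (Metric.ball (0:ℂ) 1))
    (hK : ∀ x ∈ Metric.ball (0:ℂ) 1, gauss u x ≤ -C)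
    (r : ℝ) (hr1 : r < 1) (x₀ : ℂ) (hx₀ : ‖x₀‖ < r) :
    (r^2 - ‖x₀‖^2)^2 * Real.exp (2 * u x₀) ≤ 4 * r^2 / C := by
  have hsub : Metric.closedBall (0:ℂ) r ⊆ Metric.ball 0 1 :=
    Metric.closedBall_subset_ball hr1
  -- curvature bound rephrased
  have hK' : ∀ z ∈ Metric.ball (0:ℂ) 1, C * Real.exp (2 * u z) ≤ lap u z := by
    intro z hz
    have h := hK z hz
    unfold gauss at h
    have e1 : Real.exp (-2 * u z) * Real.exp (2 * u z) = 1 := by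
      rw [← Real.exp_add]; norm_num
    have h2 : C ≤ Real.exp (-2 * u z) * lap u z := by linarith
    calc C * Real.exp (2 * u z)
        ≤ (Real.exp (-2 * u z) * lap u z) * Real.exp (2 * u z) :=
          mul_le_mul_of_nonneg_right h2 (Real.exp_pos _).le
      _ = lap u z * (Real.exp (-2 * u z) * Real.exp (2 * u z)) := by ring
      _ = lap u z := by rw [e1, mul_one]
  set φ : ℂ → ℝ := fun z => (r^2 - z.re^2 - z.im^2)^2 * Real.exp (2 * u z) with hφ
  have hφcont : ContinuousOn φ (Metric.closedBall (0:ℂ) r) := by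
    apply ContinuousOn.mul
    · fun_prop
    · exact Real.continuous_exp.comp_continuousOn
        (continuousOn_const.mul (hu.continuousOn.mono hsub))
  have hx₀K : x₀ ∈ Metric.closedBall (0:ℂ) r := by
    rw [Metric.mem_closedBall, dist_zero_right]; exact hx₀.le
  obtain ⟨z₀, hz₀K, hmax⟩ :=
    (isCompact_closedBall (0:ℂ) r).exists_isMaxOn ⟨x₀, hx₀K⟩ hφcont
  have hr0 : 0 < r := lt_of_le_of_lt (norm_nonneg x₀) hx₀
  have hfx₀ : 0 < r^2 - x₀.re^2 - x₀.im^2 := mem_ball_pos (by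
    rw [mem_ball_zero_iff]; exact hx₀)
  have hφx₀ : 0 < φ x₀ := mul_pos (pow_pos hfx₀ 2) (Real.exp_pos _)
  have hz₀lt : ‖z₀‖ < r := by
    rcases lt_or_eq_of_le (mem_closedBall_zero_iff.mp hz₀K) with h | h
    · exact h
    · exfalso
      have hf0 : r^2 - z₀.re^2 - z₀.im^2 = 0 := by
        have := normsq' z₀; rw [h] at this; linarith
      have : φ z₀ = 0 := by rw [hφ]; simp [hf0]
      have := hmax hx₀K
      simp only [Set.mem_setOf_eq] at this
      rw [‹φ z₀ = 0›] at this
      linarith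
  have hz₀m : (⟨z₀.re, z₀.im⟩ : ℂ) ∈ Metric.ball (0:ℂ) r := by
    rw [mem_ball_zero_iff]; exact hz₀lt
  have hf₀ : 0 < r^2 - z₀.re^2 - z₀.im^2 := mem_ball_pos hz₀m
  have hz₀1 : z₀ ∈ Metric.ball (0:ℂ) 1 := hsub (Metric.ball_subset_closedBall
    (by rw [mem_ball_zero_iff]; exact hz₀lt))
  -- the auxiliary function and its local max
  set h' : ℂ → ℝ := fun z => 2 * u z + 2 * Real.log (r^2 - z.re^2 - z.im^2) with hh'
  have hexp : ∀ w : ℂ, 0 < r^2 - w.re^2 - w.im^2 → Real.exp (h' w) = φ w := by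
    intro w hw
    rw [hh', hφ]
    simp only
    rw [Real.exp_add]
    have : (2:ℝ) * Real.log (r^2 - w.re^2 - w.im^2)
        = Real.log ((r^2 - w.re^2 - w.im^2)^2) := by
      rw [Real.log_pow]; norm_num
    rw [this, Real.exp_log (pow_pos hw 2)]
    ring
  have hmax' : IsLocalMax h' z₀ := by
    have hball : Metric.ball (0:ℂ) r ∈ nhds z₀ :=
      Metric.isOpen_ball.mem_nhds (mem_ball_zero_iff.mpr hz₀lt)
    filter_upwards [hball] with z hz
    have hfz : 0 < r^2 - z.re^2 - z.im^2 := mem_ball_pos (by exact hz)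
    have hφz : φ z ≤ φ z₀ := hmax (Metric.ball_subset_closedBall hz)
    have : Real.exp (h' z) ≤ Real.exp (h' z₀) := by
      rw [hexp z hfz, hexp z₀ hf₀]; exact hφz
    exact Real.exp_le_exp.mp this
  -- slices
  have hmk : ∀ b : ℝ, ContDiff ℝ (⊤ : ℕ∞) (fun t : ℝ => (⟨t, b⟩ : ℂ)) := by
    intro b
    have : (fun t : ℝ => (⟨t, b⟩ : ℂ)) = fun t : ℝ => (t : ℂ) + (b : ℂ) * Complex.I := by
      funext t; apply Complex.ext <;> simp
    rw [this]
    exact Complex.ofRealCLM.contDiff.add contDiff_const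
  have hmk' : ∀ a : ℝ, ContDiff ℝ (⊤ : ℕ∞) (fun t : ℝ => (⟨a, t⟩ : ℂ)) := by
    intro a
    have : (fun t : ℝ => (⟨a, t⟩ : ℂ)) = fun t : ℝ => (a : ℂ) + (t : ℂ) * Complex.I := by
      funext t; apply Complex.ext <;> simp
    rw [this]
    exact contDiff_const.add (Complex.ofRealCLM.contDiff.mul contDiff_const)
  -- x-direction
  set Sx : Set ℝ := (fun t : ℝ => (⟨t, z₀.im⟩ : ℂ)) ⁻¹' (Metric.ball (0:ℂ) r) with hSx
  have hSxopen : IsOpen Sx := Metric.isOpen_ball.preimage (hmk z₀.im).continuous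
  have hz₀Sx : z₀.re ∈ Sx := hz₀m
  have hUx : ContDiffOn ℝ 2 (fun t : ℝ => u (⟨t, z₀.im⟩ : ℂ)) Sx :=
    (hu.comp ((hmk z₀.im).contDiffOn)
      (fun t ht => Metric.ball_subset_ball hr1.le ht)).of_le (WithTop.coe_le_coe.mpr le_top)
  have hLx : ContDiffOn ℝ 2 (fun t : ℝ => Real.log (r^2 - t^2 - z₀.im^2)) Sx := by
    apply ContDiffOn.log
    · exact ((contDiff_const.sub (contDiff_id.pow 2)).sub contDiff_const).contDiffOn
    · exact fun t ht => ne_of_gt (mem_ball_pos ht)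
  have hA : deriv (deriv (fun t : ℝ =>
      2 * u (⟨t, z₀.im⟩ : ℂ) + 2 * Real.log (r^2 - t^2 - z₀.im^2))) z₀.re ≤ 0 := by
    apply second_deriv_nonpos_of_localMax hSxopen hz₀Sx
      ((contDiffOn_const.mul hUx).add (contDiffOn_const.mul hLx))
    exact ((hmk z₀.im).continuous.continuousAt (x := z₀.re)).eventually hmax'
  have hAeq : deriv (deriv (fun t : ℝ =>
      2 * u (⟨t, z₀.im⟩ : ℂ) + 2 * Real.log (r^2 - t^2 - z₀.im^2))) z₀.re
      = 2 * deriv (deriv (fun t : ℝ => u (⟨t, z₀.im⟩ : ℂ))) z₀.re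
        + 2 * ((-2*(r^2 - z₀.re^2 - z₀.im^2) - 4*z₀.re^2) / (r^2 - z₀.re^2 - z₀.im^2)^2) := by
    rw [deriv2_add hSxopen hz₀Sx (contDiffOn_const.mul hUx) (contDiffOn_const.mul hLx),
      deriv2_const_mul 2 hSxopen hz₀Sx hUx, deriv2_const_mul 2 hSxopen hz₀Sx hLx,
      deriv2_logpart r z₀.im z₀.re hf₀]
  -- y-direction
  set Sy : Set ℝ := (fun t : ℝ => (⟨z₀.re, t⟩ : ℂ)) ⁻¹' (Metric.ball (0:ℂ) r) with hSy
  have hSyopen : IsOpen Sy := Metric.isOpen_ball.preimage (hmk' z₀.re).continuous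
  have hz₀Sy : z₀.im ∈ Sy := hz₀m
  have hUy : ContDiffOn ℝ 2 (fun t : ℝ => u (⟨z₀.re, t⟩ : ℂ)) Sy :=
    (hu.comp ((hmk' z₀.re).contDiffOn)
      (fun t ht => Metric.ball_subset_ball hr1.le ht)).of_le (WithTop.coe_le_coe.mpr le_top)
  have hfun : (fun t : ℝ => Real.log (r^2 - z₀.re^2 - t^2))
      = fun t : ℝ => Real.log (r^2 - t^2 - z₀.re^2) := by
    funext t; congr 1; ring
  have hLy : ContDiffOn ℝ 2 (fun t : ℝ => Real.log (r^2 - z₀.re^2 - t^2)) Sy := by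
    apply ContDiffOn.log
    · exact (contDiff_const.sub (contDiff_id.pow 2)).contDiffOn
    · intro t ht
      have h1 := mem_ball_pos (r := r) (t := z₀.re) (b := t) (by exact ht)
      exact ne_of_gt (by linarith)
  have hB : deriv (deriv (fun t : ℝ =>
      2 * u (⟨z₀.re, t⟩ : ℂ) + 2 * Real.log (r^2 - z₀.re^2 - t^2))) z₀.im ≤ 0 := by
    apply second_deriv_nonpos_of_localMax hSyopen hz₀Sy
      ((contDiffOn_const.mul hUy).add (contDiffOn_const.mul hLy))
    exact ((hmk' z₀.re).continuous.continuousAt (x := z₀.im)).eventually hmax'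
  have hBeq : deriv (deriv (fun t : ℝ =>
      2 * u (⟨z₀.re, t⟩ : ℂ) + 2 * Real.log (r^2 - z₀.re^2 - t^2))) z₀.im
      = 2 * deriv (deriv (fun t : ℝ => u (⟨z₀.re, t⟩ : ℂ))) z₀.im
        + 2 * ((-2*(r^2 - z₀.im^2 - z₀.re^2) - 4*z₀.im^2) / (r^2 - z₀.im^2 - z₀.re^2)^2) := by
    rw [deriv2_add hSyopen hz₀Sy (contDiffOn_const.mul hUy) (contDiffOn_const.mul hLy),
      deriv2_const_mul 2 hSyopen hz₀Sy hUy, deriv2_const_mul 2 hSyopen hz₀Sy hLy, hfun,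
      deriv2_logpart r z₀.re z₀.im (by linarith)]
  -- combine
  have hlap : lap u z₀ = deriv (deriv (fun t : ℝ => u (⟨t, z₀.im⟩ : ℂ))) z₀.re
      + deriv (deriv (fun t : ℝ => u (⟨z₀.re, t⟩ : ℂ))) z₀.im := rfl
  have hcurv := hK' z₀ hz₀1
  set F := r^2 - z₀.re^2 - z₀.im^2 with hF
  have hF2 : (0:ℝ) < F^2 := pow_pos hf₀ 2
  have hsum : 2 * lap u z₀ ≤ 8 * r^2 / F^2 := by
    rw [hAeq] at hA; rw [hBeq] at hB
    rw [hlap]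
    have hswap : r^2 - z₀.im^2 - z₀.re^2 = F := by rw [hF]; ring
    rw [hswap] at hB
    have e1 : (-2*F - 4*z₀.re^2) / F^2 + (-2*F - 4*z₀.im^2) / F^2 = -(4 * r^2) / F^2 := by
      rw [← add_div]
      congr 1
      rw [hF]; ring
    have e2 : -(4*r^2)/F^2 * (-2) = 8*r^2/F^2 := by ring
    linarith [hA, hB, e1, e2]
  have h1 : C * Real.exp (2 * u z₀) ≤ 4 * r^2 / F^2 := by
    have h8 : 8*r^2/F^2 = 2*(4*r^2/F^2) := by ring
    linarith [hcurv, hsum]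
  have h3 : C * Real.exp (2 * u z₀) * F^2 ≤ 4 * r^2 := by
    have := mul_le_mul_of_nonneg_right h1 hF2.le
    rwa [div_mul_cancel₀ _ (ne_of_gt hF2)] at this
  have h2 : φ z₀ ≤ 4 * r^2 / C := by
    show F^2 * Real.exp (2 * u z₀) ≤ 4 * r^2 / C
    calc F^2 * Real.exp (2 * u z₀) = (C * Real.exp (2 * u z₀) * F^2) / C := by
          field_simp
      _ ≤ 4 * r^2 / C := by gcongr
  have h4 : φ x₀ ≤ 4 * r^2 / C := le_trans (hmax hx₀K) h2
  have h5 : r^2 - ‖x₀‖^2 = r^2 - x₀.re^2 - x₀.im^2 := by rw [normsq']; ring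
  rw [h5]
  exact h4


/-- If `g = e^{2u}|dz|²` is a (possibly incomplete) conformal metric on the
unit disc with Gauss curvature bounded above by `−C < 0`, then `g` is dominated
by the complete metric `H = C⁻¹ (2/(1−|x|²))² |dz|²` of constant curvature
`−C`. -/
theorem negatively_curved_metric_upper_bound
    (C : ℝ) (hC : 0 < C) (u : ℂ → ℝ)
    (hu : ContDiffOn ℝ (⊤ : ℕ∞) u (Metric.ball (0:ℂ) 1))
    (hK : ∀ x ∈ Metric.ball (0:ℂ) 1, gauss u x ≤ -C) :
    ∀ x ∈ Metric.ball (0:ℂ) 1,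
      Real.exp (2 * u x) ≤ C⁻¹ * (2 / (1 - ‖x‖ ^ 2)) ^ 2 := by
  intro x hx
  rw [mem_ball_zero_iff] at hx
  set a := ‖x‖ with ha
  have ha0 : 0 ≤ a := norm_nonneg x
  have ha1 : a < 1 := hx
  have ha2 : a^2 < 1 := by nlinarith
  set G : ℝ → ℝ := fun r => C⁻¹ * (2 * r / (r^2 - a^2))^2 with hG
  have hbound : ∀ r ∈ Set.Ioo a 1, Real.exp (2 * u x) ≤ G r := by
    intro r hr
    have hk := key C hC u hu hK r hr.2 x hr.1
    have hr0 : 0 < r := lt_of_le_of_lt ha0 hr.1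
    have hd : 0 < r^2 - a^2 := by nlinarith [hr.1]
    have hd2 : (0:ℝ) < (r^2 - a^2)^2 := pow_pos hd 2
    rw [hG]
    simp only
    rw [div_pow, mul_pow]
    have e : C⁻¹ * (2^2 * r^2 / (r^2 - a^2)^2) = (4 * r^2 / C) / (r^2 - a^2)^2 := by
      field_simp; ring
    rw [e, le_div_iff₀ hd2]
    rw [ha] at hd hd2 ⊢
    linarith [hk]
  have hlim : Filter.Tendsto G (nhdsWithin 1 (Set.Iio 1)) (nhds (C⁻¹ * (2 / (1 - a^2))^2)) := by
    have hcont : ContinuousAt G 1 := by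
      apply ContinuousAt.mul continuousAt_const
      apply ContinuousAt.pow
      apply ContinuousAt.div
      · fun_prop
      · fun_prop
      · intro h; rw [one_pow, sub_eq_zero] at h; linarith [h.symm ▸ ha2]
    have : G 1 = C⁻¹ * (2 / (1 - a^2))^2 := by rw [hG]; norm_num
    rw [← this]
    exact hcont.continuousWithinAt.tendsto
  have hev : ∀ᶠ r in nhdsWithin 1 (Set.Iio 1), Real.exp (2 * u x) ≤ G r := by
    filter_upwards [Ioo_mem_nhdsLT_of_mem (Set.mem_Ioc.mpr ⟨ha1, le_refl 1⟩)] with r hr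
    exact hbound r hr
  exact ge_of_tendsto hlim hev
end

section
/- Let e^{2w(t)}|dz|² be an admissible Ricci flow on [0,T] × 𝒟 (unit disc) with initial metric e^{2u₀}|dz|² satisfying K[u₀] ≤ −1. Then for all t ∈ [0,T] and x ∈ 𝒟, w(t,x) ≤ ln(2/(1−|x|²)) + (1/2) ln(2t+1). -/
/-- Completeness of the conformal metric `e^{2u}|dz|²` on an open set `U ⊆ ℂ`:
every C¹ path eventually leaving each compact subset of `U` has infinite length. -/
def ConfComplete (U : Set ℂ) (u : ℂ → ℝ) : Prop :=
  ∀ γ : ℝ → ℂ, ContDiffOn ℝ 1 γ (Set.Ico (0:ℝ) 1) →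
    (∀ s ∈ Set.Ico (0:ℝ) 1, γ s ∈ U) →
    (∀ K : Set ℂ, IsCompact K → K ⊆ U →
      ∀ᶠ s in nhdsWithin 1 (Set.Iio 1), γ s ∉ K) →
    Filter.Tendsto (fun s => ∫ r in (0:ℝ)..s, Real.exp (u (γ r)) * ‖deriv γ r‖)
      (nhdsWithin 1 (Set.Iio 1)) Filter.atTop


/-- An admissible Ricci flow on `[0,T] × 𝒟` (`𝒟` the unit disc), in conformal
form `g(t) = e^{2 w(t)}|dz|²`: it solves `∂w/∂t = e^{-2w}Δw`, is smooth in
space, complete for `t > 0`, has curvature bounded above on `[0,T]` and bounded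
below on `[ε,T]` for every `ε ∈ (0,T]`. -/
structure AdmissibleRicciFlow (T : ℝ) (w : ℝ → ℂ → ℝ) : Prop where
  pde : ∀ t ∈ Set.Icc (0:ℝ) T, ∀ x ∈ Metric.ball (0:ℂ) 1,
    HasDerivAt (fun τ => w τ x) (Real.exp (-2 * w t x) * lap (w t) x) t
  smooth : ∀ t ∈ Set.Icc (0:ℝ) T, ContDiffOn ℝ (⊤ : ℕ∞) (w t) (Metric.ball (0:ℂ) 1)
  complete : ∀ t ∈ Set.Ioc (0:ℝ) T, ConfComplete (Metric.ball (0:ℂ) 1) (w t)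
  curv_upper : ∃ C : ℝ, ∀ t ∈ Set.Icc (0:ℝ) T, ∀ x ∈ Metric.ball (0:ℂ) 1,
    gauss (w t) x ≤ C
  curv_lower : ∀ ε ∈ Set.Ioc (0:ℝ) T, ∃ C : ℝ, ∀ t ∈ Set.Icc ε T,
    ∀ x ∈ Metric.ball (0:ℂ) 1, -C ≤ gauss (w t) x

open Set Filter Topology

open Set Filter Topology

/-- Second derivative test at a local max. -/
lemma second_deriv_nonpos_of_isLocalMax {f : ℝ → ℝ} {x : ℝ}
    (hd : ∀ᶠ y in 𝓝 x, DifferentiableAt ℝ f y)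
    (hd2 : DifferentiableAt ℝ (deriv f) x)
    (hmax : IsLocalMax f x) : deriv (deriv f) x ≤ 0 := by
  by_contra hc
  push_neg at hc
  have h1 : deriv f x = 0 := hmax.deriv_eq_zero
  have hslope : Tendsto (slope (deriv f) x) (𝓝[≠] x) (𝓝 (deriv (deriv f) x)) :=
    hasDerivAt_iff_tendsto_slope.1 hd2.hasDerivAt
  have hslope' : Tendsto (slope (deriv f) x) (𝓝[>] x) (𝓝 (deriv (deriv f) x)) :=
    hslope.mono_left (nhdsWithin_mono x fun y hy => ne_of_gt hy)
  have hpos : ∀ᶠ y in 𝓝[>] x, 0 < slope (deriv f) x y :=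
    hslope'.eventually (eventually_gt_nhds hc)
  have hpos' : ∀ᶠ y in 𝓝[>] x, 0 < deriv f y := by
    filter_upwards [hpos, self_mem_nhdsWithin] with y hy hy'
    have hs : slope (deriv f) x y = (deriv f y) / (y - x) := by
      simp [slope, h1, div_eq_inv_mul]
    rw [hs] at hy
    have hyx : 0 < y - x := sub_pos.2 hy'
    by_contra hn
    push_neg at hn
    nlinarith [div_nonpos_of_nonpos_of_nonneg hn hyx.le]
  -- get ε with props on Ioc x (x+ε)
  obtain ⟨e1, he1, H1⟩ := (nhdsGT_basis x).eventually_iff.1 hpos'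
  obtain ⟨e2, he2, H2⟩ := Metric.eventually_nhds_iff.1 hd
  obtain ⟨e3, he3, H3⟩ := Metric.eventually_nhds_iff.1 hmax
  set b : ℝ := min (min e1 (x+e2)) (x+e3) with hb
  have hxb : x < b := by
    simp only [hb, lt_min_iff]
    exact ⟨⟨he1, by linarith⟩, by linarith⟩
  set y₀ : ℝ := (x + b)/2 with hy₀
  have hxy₀ : x < y₀ := by simp only [hy₀]; linarith
  have hy₀b : y₀ < b := by simp only [hy₀]; linarith
  have hmono : StrictMonoOn f (Icc x y₀) := by
    apply strictMonoOn_of_deriv_pos (convex_Icc x y₀)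
    · intro y hy
      have : DifferentiableAt ℝ f y := by
        apply H2
        rw [Real.dist_eq, abs_of_nonneg (by linarith [hy.1] : (0:ℝ) ≤ y - x)]
        have : y₀ < x + e2 := lt_of_lt_of_le (lt_of_lt_of_le hy₀b (min_le_left _ _)) (min_le_right _ _)
        linarith [hy.2]
      exact this.continuousAt.continuousWithinAt
    · intro y hy
      rw [interior_Icc] at hy
      apply H1
      constructor
      · exact hy.1
      · have : y₀ ≤ e1 := le_trans hy₀b.le (le_trans (min_le_left _ _) (min_le_left _ _))
        linarith [hy.2]
  have hlt : f x < f y₀ := hmono (left_mem_Icc.2 hxy₀.le) (right_mem_Icc.2 hxy₀.le) hxy₀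
  have : f y₀ ≤ f x := by
    apply H3
    rw [Real.dist_eq, abs_of_nonneg (by linarith : (0:ℝ) ≤ y₀ - x)]
    have : y₀ < x + e3 := lt_of_lt_of_le hy₀b (min_le_right _ _)
    linarith
  linarith

/-- At a max over `[0,x]`, the derivative is nonnegative. -/
lemma deriv_nonneg_of_isMaxOn_left {f : ℝ → ℝ} {d x : ℝ} (hx : 0 < x)
    (hf : HasDerivAt f d x) (h : ∀ s ∈ Icc (0:ℝ) x, f s ≤ f x) : 0 ≤ d := by
  have hslope : Tendsto (slope f x) (𝓝[<] x) (𝓝 d) :=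
    (hasDerivAt_iff_tendsto_slope.1 hf).mono_left (nhdsWithin_mono x fun y hy => ne_of_lt hy)
  refine ge_of_tendsto hslope ?_
  have hmem : Ioo (0:ℝ) x ∈ 𝓝[<] x := Ioo_mem_nhdsLT_of_mem ⟨hx, le_refl x⟩
  filter_upwards [hmem] with y hy
  have h1 : f y ≤ f x := h y ⟨hy.1.le, hy.2.le⟩
  have h2 : y - x < 0 := by linarith [hy.2]
  rw [slope_def_field]
  rw [div_nonneg_iff]
  right
  constructor <;> linarith

/-- Uniform lower bound on derivative gives one-sided comparison. -/
lemma le_add_of_deriv_lower {f : ℝ → ℝ} {T C₀ : ℝ} {d : ℝ → ℝ}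
    (hf : ∀ s ∈ Icc (0:ℝ) T, HasDerivAt f (d s) s)
    (hd : ∀ s ∈ Icc (0:ℝ) T, -C₀ ≤ d s)
    {s t : ℝ} (hs : s ∈ Icc (0:ℝ) T) (ht : t ∈ Icc (0:ℝ) T) (hst : s ≤ t) :
    f s ≤ f t + C₀ * (t - s) := by
  have hmono : MonotoneOn (fun s => f s + C₀ * s) (Icc (0:ℝ) T) := by
    apply monotoneOn_of_deriv_nonneg (convex_Icc 0 T)
    · intro y hy
      have H : HasDerivAt (fun s => f s + C₀ * s) (d y + C₀ * 1) y := by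
        simpa using (hf y hy).fun_add ((hasDerivAt_id y).const_mul C₀)
      exact H.continuousAt.continuousWithinAt
    · intro y hy
      rw [interior_Icc] at hy
      have H : HasDerivAt (fun s => f s + C₀ * s) (d y + C₀ * 1) y := by
        simpa using (hf y ⟨hy.1.le, hy.2.le⟩).fun_add ((hasDerivAt_id y).const_mul C₀)
      exact H.differentiableAt.differentiableWithinAt
    · intro y hy
      rw [interior_Icc] at hy
      have hy' : y ∈ Icc (0:ℝ) T := ⟨hy.1.le, hy.2.le⟩
      have H : HasDerivAt (fun s => f s + C₀ * s) (d y + C₀ * 1) y := by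
        simpa using (hf y hy').fun_add ((hasDerivAt_id y).const_mul C₀)
      rw [H.deriv]
      have := hd y hy'
      linarith
  have := hmono hs ht hst
  simp only at this
  linarith

/-- properties of a C^∞-at-a-point real function needed for second derivatives -/
lemma slice_props {f : ℝ → ℝ} {x : ℝ} (hf : ContDiffAt ℝ (⊤ : ℕ∞) f x) :
    (∀ᶠ y in 𝓝 x, DifferentiableAt ℝ f y) ∧ DifferentiableAt ℝ (deriv f) x := by
  obtain ⟨u, hu, hcd⟩ := hf.contDiffOn (m := 2) (WithTop.coe_le_coe.2 (le_top : (2:ℕ∞) ≤ ⊤)) (by simp)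
  obtain ⟨o, ho_sub, ho_open, hx_o⟩ := mem_nhds_iff.1 hu
  have hcd' : ContDiffOn ℝ 2 f o := hcd.mono ho_sub
  constructor
  · filter_upwards [ho_open.mem_nhds hx_o] with y hy
    exact (hcd'.differentiableOn (by norm_num)).differentiableAt (ho_open.mem_nhds hy)
  · have : ContDiffOn ℝ 1 (deriv f) o := hcd'.deriv_of_isOpen ho_open (by norm_num)
    exact (this.differentiableOn (by norm_num)).differentiableAt (ho_open.mem_nhds hx_o)

lemma contDiffAt_slice_re {u : ℂ → ℝ} {z : ℂ} (hu : ContDiffOn ℝ (⊤ : ℕ∞) u (Metric.ball 0 1))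
    (hz : z ∈ Metric.ball (0:ℂ) 1) : ContDiffAt ℝ (⊤ : ℕ∞) (fun r : ℝ => u ⟨r, z.im⟩) z.re := by
  have hL : ContDiff ℝ (⊤ : ℕ∞) (fun r : ℝ => (⟨r, z.im⟩ : ℂ)) := by
    have : (fun r : ℝ => (⟨r, z.im⟩ : ℂ)) = fun r : ℝ => (r : ℂ) + z.im * Complex.I := by
      funext r; apply Complex.ext <;> simp
    rw [this]
    exact Complex.ofRealCLM.contDiff.add contDiff_const
  have h1 : ContDiffAt ℝ (⊤ : ℕ∞) u z := hu.contDiffAt (Metric.isOpen_ball.mem_nhds hz)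
  have h2 : ContDiffAt ℝ (⊤ : ℕ∞) u (⟨z.re, z.im⟩ : ℂ) := by convert h1 using 2
  exact h2.comp z.re hL.contDiffAt

lemma contDiffAt_slice_im {u : ℂ → ℝ} {z : ℂ} (hu : ContDiffOn ℝ (⊤ : ℕ∞) u (Metric.ball 0 1))
    (hz : z ∈ Metric.ball (0:ℂ) 1) : ContDiffAt ℝ (⊤ : ℕ∞) (fun s : ℝ => u ⟨z.re, s⟩) z.im := by
  have hL : ContDiff ℝ (⊤ : ℕ∞) (fun s : ℝ => (⟨z.re, s⟩ : ℂ)) := by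
    have : (fun s : ℝ => (⟨z.re, s⟩ : ℂ)) = fun s : ℝ => (z.re : ℂ) + s * Complex.I := by
      funext s; apply Complex.ext <;> simp
    rw [this]
    exact contDiff_const.add (Complex.ofRealCLM.contDiff.mul contDiff_const)
  have h1 : ContDiffAt ℝ (⊤ : ℕ∞) u z := hu.contDiffAt (Metric.isOpen_ball.mem_nhds hz)
  have h2 : ContDiffAt ℝ (⊤ : ℕ∞) u (⟨z.re, z.im⟩ : ℂ) := by convert h1 using 2
  exact h2.comp z.im hL.contDiffAt

/-- first derivative of the barrier slice -/
lemma hslice_d1 {a y c d : ℝ} {r : ℝ} (h : r^2 + y^2 < a) :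
    HasDerivAt (fun r : ℝ => c - Real.log (a - (r^2+y^2)) + d)
      (2*r / (a - (r^2+y^2))) r := by
  have hF : HasDerivAt (fun r : ℝ => a - (r^2+y^2)) (-(2*r)) r := by
    have : HasDerivAt (fun r : ℝ => r^2 + y^2) (2*r) r := by
      simpa using (hasDerivAt_pow 2 r).add_const (y^2)
    simpa using this.const_sub a
  have hne : a - (r^2+y^2) ≠ 0 := by nlinarith
  have hlog : HasDerivAt (fun r : ℝ => Real.log (a - (r^2+y^2)))
      ((a - (r^2+y^2))⁻¹ * (-(2*r))) r := by convert hF.log hne using 1; ring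
  have := (hlog.const_sub c).add_const d
  refine this.congr_deriv ?_
  ring

/-- second derivative of the barrier slice -/
lemma hslice_d2 {a y c d : ℝ} {r : ℝ} (h : r^2 + y^2 < a) :
    deriv (deriv (fun r : ℝ => c - Real.log (a - (r^2+y^2)) + d)) r =
      (2*(a - (r^2+y^2)) + 4*r^2) / (a - (r^2+y^2))^2 := by
  have hopen : IsOpen {r : ℝ | r^2 + y^2 < a} :=
    isOpen_lt (by continuity) continuous_const
  have hev : deriv (fun r : ℝ => c - Real.log (a - (r^2+y^2)) + d)
      =ᶠ[𝓝 r] fun r => 2*r / (a - (r^2+y^2)) := by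
    filter_upwards [hopen.mem_nhds h] with s hs
    exact (hslice_d1 hs).deriv
  rw [hev.deriv_eq]
  have hne : a - (r^2+y^2) ≠ 0 := by nlinarith
  have hu : HasDerivAt (fun r : ℝ => 2*r) 2 r := by simpa using (hasDerivAt_id r).const_mul 2
  have hv : HasDerivAt (fun r : ℝ => a - (r^2+y^2)) (-(2*r)) r := by
    have : HasDerivAt (fun r : ℝ => r^2 + y^2) (2*r) r := by
      simpa using (hasDerivAt_pow 2 r).add_const (y^2)
    simpa using this.const_sub a
  have := (hu.fun_div hv hne).deriv
  rw [this]
  field_simp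
  ring

/-- eventual differentiability of the barrier slice -/
lemma hslice_ediff {a y c d : ℝ} {r : ℝ} (h : r^2 + y^2 < a) :
    ∀ᶠ s in 𝓝 r, DifferentiableAt ℝ (fun r : ℝ => c - Real.log (a - (r^2+y^2)) + d) s := by
  have hopen : IsOpen {r : ℝ | r^2 + y^2 < a} :=
    isOpen_lt (by continuity) continuous_const
  filter_upwards [hopen.mem_nhds h] with s hs
  exact (hslice_d1 hs).differentiableAt

/-- differentiability of deriv of barrier slice -/
lemma hslice_ddiff {a y c d : ℝ} {r : ℝ} (h : r^2 + y^2 < a) :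
    DifferentiableAt ℝ (deriv (fun r : ℝ => c - Real.log (a - (r^2+y^2)) + d)) r := by
  have hopen : IsOpen {r : ℝ | r^2 + y^2 < a} :=
    isOpen_lt (by continuity) continuous_const
  have hev : deriv (fun r : ℝ => c - Real.log (a - (r^2+y^2)) + d)
      =ᶠ[𝓝 r] fun r => 2*r / (a - (r^2+y^2)) := by
    filter_upwards [hopen.mem_nhds h] with s hs
    exact (hslice_d1 hs).deriv
  rw [hev.differentiableAt_iff]
  have hne : a - (r^2+y^2) ≠ 0 := by nlinarith
  have hu : HasDerivAt (fun r : ℝ => 2*r) 2 r := by simpa using (hasDerivAt_id r).const_mul 2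
  have hv : HasDerivAt (fun r : ℝ => a - (r^2+y^2)) (-(2*r)) r := by
    have : HasDerivAt (fun r : ℝ => r^2 + y^2) (2*r) r := by
      simpa using (hasDerivAt_pow 2 r).add_const (y^2)
    simpa using this.const_sub a
  exact (hu.div hv hne).differentiableAt


/-- Key spatial estimate: at an interior local max of `u - h_barrier`,
`lap u ≤ 4a/(a-|z|²)²`. -/
lemma lap_le_of_isLocalMax {u : ℂ → ℝ} (hu : ContDiffOn ℝ (⊤ : ℕ∞) u (Metric.ball 0 1)) {z : ℂ}
    (hz : z ∈ Metric.ball (0:ℂ) 1) {a c d : ℝ} (hQ : z.re^2 + z.im^2 < a)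
    (hmax : IsLocalMax (fun y : ℂ => u y - (c - Real.log (a - (y.re^2 + y.im^2)) + d)) z) :
    lap u z ≤ 4*a / (a - (z.re^2 + z.im^2))^2 := by
  have hne : a - (z.re^2 + z.im^2) ≠ 0 := by nlinarith
  -- re slice
  set fR : ℝ → ℝ := fun r => u ⟨r, z.im⟩ with hfR
  set gR : ℝ → ℝ := fun r => c - Real.log (a - (r^2 + z.im^2)) + d with hgR
  have hQR : z.re^2 + z.im^2 < a := hQ
  have hpropsR := slice_props (contDiffAt_slice_re hu hz)
  have hmaxR : IsLocalMax (fun r => fR r - gR r) z.re := by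
    have hL : Tendsto (fun r : ℝ => (⟨r, z.im⟩ : ℂ)) (𝓝 z.re) (𝓝 z) := by
      have hc : Continuous (fun r : ℝ => (⟨r, z.im⟩ : ℂ)) := by
        have : (fun r : ℝ => (⟨r, z.im⟩ : ℂ)) = fun r : ℝ => (r : ℂ) + z.im * Complex.I := by
          funext r; apply Complex.ext <;> simp
        rw [this]; continuity
      have := hc.tendsto z.re
      simpa [Complex.eta] using this
    have := hL.eventually hmax
    filter_upwards [this] with r hr
    simpa [Complex.eta] using hr
  have hevR : deriv (fun r => fR r - gR r) =ᶠ[𝓝 z.re] fun r => deriv fR r - deriv gR r := by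
    filter_upwards [hpropsR.1, hslice_ediff (y := z.im) (c := c) (d := d) hQR] with r h1 h2
    exact deriv_sub h1 h2
  have hd2R : deriv (deriv fR) z.re ≤ deriv (deriv gR) z.re := by
    have hd : ∀ᶠ y in 𝓝 z.re, DifferentiableAt ℝ (fun r => fR r - gR r) y := by
      filter_upwards [hpropsR.1, hslice_ediff (y := z.im) (c := c) (d := d) hQR] with r h1 h2
      exact h1.sub h2
    have hdd : DifferentiableAt ℝ (deriv fun r => fR r - gR r) z.re := by
      rw [hevR.differentiableAt_iff]
      exact hpropsR.2.sub (hslice_ddiff hQR)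
    have := second_deriv_nonpos_of_isLocalMax hd hdd hmaxR
    rw [hevR.deriv_eq, deriv_fun_sub hpropsR.2 (hslice_ddiff hQR)] at this
    linarith
  -- im slice
  set fI : ℝ → ℝ := fun s => u ⟨z.re, s⟩ with hfI
  set gI : ℝ → ℝ := fun s => c - Real.log (a - (s^2 + z.re^2)) + d with hgI
  have hQI : z.im^2 + z.re^2 < a := by linarith
  have hpropsI := slice_props (contDiffAt_slice_im hu hz)
  have hmaxI : IsLocalMax (fun s => fI s - gI s) z.im := by
    have hL : Tendsto (fun s : ℝ => (⟨z.re, s⟩ : ℂ)) (𝓝 z.im) (𝓝 z) := by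
      have hc : Continuous (fun s : ℝ => (⟨z.re, s⟩ : ℂ)) := by
        have : (fun s : ℝ => (⟨z.re, s⟩ : ℂ)) = fun s : ℝ => (z.re : ℂ) + s * Complex.I := by
          funext s; apply Complex.ext <;> simp
        rw [this]; continuity
      have := hc.tendsto z.im
      simpa [Complex.eta] using this
    have := hL.eventually hmax
    filter_upwards [this] with s hs
    have : u ⟨z.re, s⟩ - (c - Real.log (a - (z.re^2 + s^2)) + d) ≤
        u z - (c - Real.log (a - (z.re^2 + z.im^2)) + d) := by
      simpa [Complex.eta] using hs
    have harg : a - (z.re^2 + s^2) = a - (s^2 + z.re^2) := by ring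
    rw [harg] at this
    simp only [hfI, hgI]
    calc u ⟨z.re, s⟩ - (c - Real.log (a - (s^2 + z.re^2)) + d) ≤
        u z - (c - Real.log (a - (z.re^2 + z.im^2)) + d) := this
      _ = u ⟨z.re, z.im⟩ - (c - Real.log (a - (z.im^2 + z.re^2)) + d) := by
          rw [Complex.eta]; ring_nf
  have hevI : deriv (fun s => fI s - gI s) =ᶠ[𝓝 z.im] fun s => deriv fI s - deriv gI s := by
    filter_upwards [hpropsI.1, hslice_ediff (y := z.re) (c := c) (d := d) hQI] with s h1 h2
    exact deriv_sub h1 h2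
  have hd2I : deriv (deriv fI) z.im ≤ deriv (deriv gI) z.im := by
    have hd : ∀ᶠ y in 𝓝 z.im, DifferentiableAt ℝ (fun s => fI s - gI s) y := by
      filter_upwards [hpropsI.1, hslice_ediff (y := z.re) (c := c) (d := d) hQI] with s h1 h2
      exact h1.sub h2
    have hdd : DifferentiableAt ℝ (deriv fun s => fI s - gI s) z.im := by
      rw [hevI.differentiableAt_iff]
      exact hpropsI.2.sub (hslice_ddiff hQI)
    have := second_deriv_nonpos_of_isLocalMax hd hdd hmaxI
    rw [hevI.deriv_eq, deriv_fun_sub hpropsI.2 (hslice_ddiff hQI)] at this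
    linarith
  have e2R := hslice_d2 (c := c) (d := d) hQR
  have e2I := hslice_d2 (c := c) (d := d) hQI
  have : lap u z = deriv (deriv fR) z.re + deriv (deriv fI) z.im := rfl
  rw [this]
  rw [e2R] at hd2R
  rw [e2I] at hd2I
  have key : (2*(a - (z.re^2 + z.im^2)) + 4*z.re^2) / (a - (z.re^2 + z.im^2))^2 +
      (2*(a - (z.im^2 + z.re^2)) + 4*z.im^2) / (a - (z.im^2 + z.re^2))^2 =
      4*a / (a - (z.re^2 + z.im^2))^2 := by
    have harg : a - (z.im^2 + z.re^2) = a - (z.re^2 + z.im^2) := by ring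
    rw [harg]
    field_simp
    ring
  linarith

noncomputable def hbar (δ t : ℝ) (z : ℂ) : ℝ :=
  Real.log (2*(1-δ)) - Real.log ((1-δ)^2 - (z.re^2 + z.im^2)) + (1/2)*Real.log (2*t+1)

lemma hbar_exp {δ t : ℝ} {z : ℂ} (hδ : δ < 1)
    (hf : 0 < (1-δ)^2 - (z.re^2 + z.im^2)) (ht : 0 ≤ t) :
    Real.exp (2 * hbar δ t z) =
      4*(1-δ)^2 * (2*t+1) / ((1-δ)^2 - (z.re^2 + z.im^2))^2 := by
  set f : ℝ := (1-δ)^2 - (z.re^2 + z.im^2) with hfdef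
  set b : ℝ := 2*(1-δ) with hbdef
  have hb : 0 < b := by simp only [hbdef]; linarith
  have hs : (0:ℝ) < 2*t+1 := by linarith
  have e1 : Real.log (f^2) = 2*Real.log f := by rw [Real.log_pow]; push_cast; ring
  have e2 : Real.log (b^2) = 2*Real.log b := by rw [Real.log_pow]; push_cast; ring
  have key : 2 * hbar δ t z = Real.log (b^2) + (-(Real.log (f^2)) + Real.log (2*t+1)) := by
    rw [e1, e2, hbar]
    ring
  rw [key, Real.exp_add, Real.exp_log (by positivity), Real.exp_add, Real.exp_neg,
    Real.exp_log (by positivity), Real.exp_log hs]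
  have hb2 : b^2 = 4*(1-δ)^2 := by rw [hbdef]; ring
  rw [hb2]
  field_simp

lemma hbar_exp_neg {δ t : ℝ} {z : ℂ} (hδ : δ < 1)
    (hf : 0 < (1-δ)^2 - (z.re^2 + z.im^2)) (ht : 0 ≤ t) :
    Real.exp (-2 * hbar δ t z) * (4*(1-δ)^2 / ((1-δ)^2 - (z.re^2 + z.im^2))^2)
      = 1/(2*t+1) := by
  have h := hbar_exp hδ hf ht
  have : Real.exp (-2 * hbar δ t z) = (Real.exp (2 * hbar δ t z))⁻¹ := by
    rw [← Real.exp_neg]; ring_nf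
  rw [this, h]
  have hs : (0:ℝ) < 2*t+1 := by linarith
  have h1 : (0:ℝ) < (1-δ) := by linarith
  field_simp

lemma hbar_hasDerivAt_t {δ t : ℝ} (z : ℂ) (ht : 0 ≤ t) :
    HasDerivAt (fun τ => hbar δ τ z) (1/(2*t+1)) t := by
  have hin : HasDerivAt (fun τ : ℝ => 2*τ+1) 2 t := by
    simpa using ((hasDerivAt_id t).const_mul 2).add_const 1
  have hlog : HasDerivAt (fun τ : ℝ => Real.log (2*τ+1)) ((2*t+1)⁻¹ * 2) t :=
    (Real.hasDerivAt_log (by linarith)).comp t hin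
  have := (hlog.const_mul (1/2)).const_add
    (Real.log (2*(1-δ)) - Real.log ((1-δ)^2 - (z.re^2 + z.im^2)))
  refine this.congr_deriv ?_
  have hne : (2*t+1) ≠ 0 := by intro h; linarith
  field_simp
lemma hbar_continuousAt {δ : ℝ} {p : ℝ × ℂ} (h1 : 2*p.1+1 ≠ 0)
    (h2 : (1-δ)^2 - (p.2.re^2 + p.2.im^2) ≠ 0) :
    ContinuousAt (fun q : ℝ × ℂ => hbar δ q.1 q.2) p := by
  have hc1 : ContinuousAt (fun q : ℝ × ℂ => (1-δ)^2 - (q.2.re^2 + q.2.im^2)) p := by fun_prop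
  have hc2 : ContinuousAt (fun q : ℝ × ℂ => 2*q.1+1) p := by fun_prop
  have : ContinuousAt (fun q : ℝ × ℂ => Real.log (2*(1-δ)) - Real.log ((1-δ)^2 - (q.2.re^2 + q.2.im^2)) + (1/2)*Real.log (2*q.1+1)) p :=
    (continuousAt_const.sub (hc1.log h2)).add (continuousAt_const.mul (hc2.log h1))
  exact this

lemma lap_congr {u v : ℂ → ℝ} {U : Set ℂ} (hU : IsOpen U) {z : ℂ} (hz : z ∈ U)
    (h : ∀ x ∈ U, u x = v x) : lap u z = lap v z := by
  have hcR : Continuous (fun r : ℝ => (⟨r, z.im⟩ : ℂ)) := by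
    have : (fun r : ℝ => (⟨r, z.im⟩ : ℂ)) = fun r : ℝ => (r : ℂ) + z.im * Complex.I := by
      funext r; apply Complex.ext <;> simp
    rw [this]; continuity
  have hcI : Continuous (fun s : ℝ => (⟨z.re, s⟩ : ℂ)) := by
    have : (fun s : ℝ => (⟨z.re, s⟩ : ℂ)) = fun s : ℝ => (z.re : ℂ) + s * Complex.I := by
      funext s; apply Complex.ext <;> simp
    rw [this]; continuity
  have hR : (fun rr : ℝ => u ⟨rr, z.im⟩) =ᶠ[𝓝 z.re] (fun rr : ℝ => v ⟨rr, z.im⟩) := by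
    have hm : {r : ℝ | (⟨r, z.im⟩ : ℂ) ∈ U} ∈ 𝓝 z.re := by
      have : z.re ∈ {r : ℝ | (⟨r, z.im⟩ : ℂ) ∈ U} := by simpa [Complex.eta] using hz
      exact (hU.preimage hcR).mem_nhds this
    filter_upwards [hm] with r hr
    exact h _ hr
  have hI : (fun ss : ℝ => u ⟨z.re, ss⟩) =ᶠ[𝓝 z.im] (fun ss : ℝ => v ⟨z.re, ss⟩) := by
    have hm : {s : ℝ | (⟨z.re, s⟩ : ℂ) ∈ U} ∈ 𝓝 z.im := by
      have : z.im ∈ {s : ℝ | (⟨z.re, s⟩ : ℂ) ∈ U} := by simpa [Complex.eta] using hz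
      exact (hU.preimage hcI).mem_nhds this
    filter_upwards [hm] with s hs
    exact h _ hs
  unfold lap
  rw [(hR.deriv).deriv_eq, (hI.deriv).deriv_eq]


lemma norm_sq_complex (z : ℂ) : z.re^2 + z.im^2 = ‖z‖^2 := by
  rw [Complex.sq_norm, Complex.normSq_apply]; ring

set_option maxHeartbeats 2000000 in
lemma core (T : ℝ) (w : ℝ → ℂ → ℝ) (hw : AdmissibleRicciFlow T w)
    (u₀ : ℂ → ℝ) (hinit : ∀ x ∈ Metric.ball (0:ℂ) 1, w 0 x = u₀ x)
    (hKu₀ : ∀ x ∈ Metric.ball (0:ℂ) 1, gauss u₀ x ≤ -1)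
    {t : ℝ} (ht : t ∈ Icc (0:ℝ) T) {x : ℂ} {δ : ℝ} (hδ0 : 0 < δ) (hδx : ‖x‖ < 1 - δ)
    {ε : ℝ} (hε : 0 < ε) : w t x ≤ hbar δ t x + ε * t := by
  have hxnn : (0:ℝ) ≤ ‖x‖ := norm_nonneg x
  have h1δ : 0 < 1 - δ := lt_of_le_of_lt hxnn hδx
  have hδ1 : δ < 1 := by linarith
  set a : ℝ := (1-δ)^2 with hadef
  have ha : 0 < a := by positivity
  obtain ⟨C, hC⟩ := hw.curv_upper
  set C₀ : ℝ := max C 0 with hC₀def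
  have hC₀0 : 0 ≤ C₀ := le_max_right _ _
  have hT0 : 0 ≤ T := le_trans ht.1 ht.2
  have hTIcc : T ∈ Icc (0:ℝ) T := ⟨hT0, le_refl T⟩
  have hdlow : ∀ s ∈ Icc (0:ℝ) T, ∀ z ∈ Metric.ball (0:ℂ) 1,
      -C₀ ≤ Real.exp (-2 * w s z) * lap (w s) z := by
    intro s hs z hz
    have := hC s hs z hz
    simp only [gauss] at this
    have hle : C ≤ C₀ := le_max_left _ _
    nlinarith
  have mono : ∀ z ∈ Metric.ball (0:ℂ) 1, ∀ s ∈ Icc (0:ℝ) T, ∀ t' ∈ Icc (0:ℝ) T,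
      s ≤ t' → w s z ≤ w t' z + C₀ * (t' - s) := by
    intro z hz s hs t' ht' hst
    exact le_add_of_deriv_lower (fun s hs => hw.pde s hs z hz)
      (fun s hs => hdlow s hs z hz) hs ht' hst
  -- bound M'
  have hsub : Metric.closedBall (0:ℂ) (1-δ) ⊆ Metric.ball (0:ℂ) 1 :=
    Metric.closedBall_subset_ball (by linarith)
  have hwTcont : ContinuousOn (w T) (Metric.closedBall (0:ℂ) (1-δ)) :=
    ((hw.smooth T hTIcc).continuousOn).mono hsub
  obtain ⟨zM, hzM, hMax⟩ := (isCompact_closedBall (0:ℂ) (1-δ)).exists_isMaxOn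
    ⟨0, by simp [Metric.mem_closedBall]; linarith⟩ hwTcont
  set M' : ℝ := w T zM + C₀ * T with hM'def
  have hM' : ∀ s ∈ Icc (0:ℝ) T, ∀ z ∈ Metric.closedBall (0:ℂ) (1-δ), w s z ≤ M' := by
    intro s hs z hz
    have h1 := mono z (hsub hz) s hs T hTIcc hs.2
    have h2 : w T z ≤ w T zM := hMax hz
    have h3 : C₀ * (T - s) ≤ C₀ * T := by nlinarith [hs.1]
    simp only [hM'def]; linarith
  -- radius ρ
  set β : ℝ := min (Real.exp (Real.log (2*(1-δ)) - M' - 1)) ((a - ‖x‖^2)/2) with hβdef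
  have hxa : ‖x‖^2 < a := by simp only [hadef]; nlinarith
  have hβpos : 0 < β := lt_min (Real.exp_pos _) (by linarith)
  have hβx : β ≤ (a - ‖x‖^2)/2 := min_le_right _ _
  have hxsq : 0 ≤ ‖x‖^2 := sq_nonneg _
  have haβ : 0 ≤ a - β := by linarith
  set ρ : ℝ := Real.sqrt (a - β) with hρdef
  have hρsq : ρ^2 = a - β := Real.sq_sqrt haβ
  have hρ0 : 0 ≤ ρ := Real.sqrt_nonneg _
  have hxρ : ‖x‖ ≤ ρ := by
    rw [hρdef, ← Real.sqrt_sq hxnn]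
    exact Real.sqrt_le_sqrt (by linarith)
  have hρδ : ρ < 1 - δ := by
    rw [hρdef, ← Real.sqrt_sq h1δ.le]
    exact Real.sqrt_lt_sqrt haβ (by simp only [hadef]; linarith)
  -- the sphere bound for hbar
  have hsphere : ∀ s ∈ Icc (0:ℝ) T, ∀ z : ℂ, ‖z‖ = ρ → M' + 1 ≤ hbar δ s z := by
    intro s hs z hz
    have hQz : z.re^2 + z.im^2 = a - β := by rw [norm_sq_complex, hz, hρsq]
    have hlogβ : Real.log β ≤ Real.log (2*(1-δ)) - M' - 1 := by
      calc Real.log β ≤ Real.log (Real.exp (Real.log (2*(1-δ)) - M' - 1)) :=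
            Real.log_le_log hβpos (min_le_left _ _)
        _ = _ := Real.log_exp _
    have hlog2 : 0 ≤ Real.log (2*s+1) := Real.log_nonneg (by linarith [hs.1])
    simp only [hbar, hQz]
    have : a - (a - β) = β := by ring
    rw [this]
    linarith
  -- Φ and K
  set K : Set (ℝ × ℂ) := Icc (0:ℝ) t ×ˢ Metric.closedBall (0:ℂ) ρ with hKdef
  set Φ : ℝ × ℂ → ℝ := fun p => w p.1 p.2 - hbar δ p.1 p.2 - ε * p.1 with hΦdef
  have hKfacts : ∀ p ∈ K, p.1 ∈ Icc (0:ℝ) T ∧ p.2 ∈ Metric.closedBall (0:ℂ) (1-δ) ∧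
      p.2 ∈ Metric.ball (0:ℂ) 1 ∧ p.2.re^2 + p.2.im^2 ≤ a - β := by
    rintro ⟨s, z⟩ ⟨hs, hz⟩
    have hz' : ‖z‖ ≤ ρ := mem_closedBall_zero_iff.1 hz
    have hzsq : z.re^2 + z.im^2 ≤ a - β := by
      rw [norm_sq_complex]; nlinarith [hρsq, norm_nonneg z, sq_nonneg (ρ - ‖z‖)]
    refine ⟨⟨hs.1, le_trans hs.2 ht.2⟩, ?_, ?_, hzsq⟩
    · exact mem_closedBall_zero_iff.2 (by linarith)
    · exact mem_ball_zero_iff.2 (by linarith)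
  have hΦbd : ∀ p ∈ K, Φ p ≤ M' - Real.log (2*(1-δ)) + Real.log a := by
    rintro ⟨s, z⟩ hp
    obtain ⟨hsT, hz1, hz2, hzsq⟩ := hKfacts _ hp
    have hfz : 0 < a - (z.re^2 + z.im^2) := by linarith
    have h1 : w s z ≤ M' := hM' s hsT z hz1
    have h2 : Real.log (a - (z.re^2 + z.im^2)) ≤ Real.log a :=
      Real.log_le_log hfz (by nlinarith [norm_sq_complex z, sq_nonneg ‖z‖])
    have h3 : 0 ≤ Real.log (2*s+1) := Real.log_nonneg (by linarith [hsT.1])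
    have h4 : 0 ≤ ε * s := by nlinarith [hsT.1]
    simp only [hΦdef, hbar]
    linarith
  have hKne : K.Nonempty := ⟨(0, 0), by
    constructor
    · exact ⟨le_refl 0, ht.1⟩
    · simpa [Metric.mem_closedBall] using hρ0⟩
  have hbddA : BddAbove (Φ '' K) := by
    refine ⟨M' - Real.log (2*(1-δ)) + Real.log a, ?_⟩
    rintro _ ⟨p, hp, rfl⟩
    exact hΦbd p hp
  set S : ℝ := sSup (Φ '' K) with hSdef
  have hmemtx : (t, x) ∈ K := ⟨⟨ht.1, le_refl t⟩, mem_closedBall_zero_iff.2 hxρ⟩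
  have hΦtx : Φ (t, x) ≤ S := le_csSup hbddA (mem_image_of_mem _ hmemtx)
  suffices hS : S ≤ 0 by
    have := le_trans hΦtx hS
    simp only [hΦdef] at this
    linarith
  by_contra hS
  push_neg at hS
  -- approximating sequence
  have hseq : ∀ n : ℕ, ∃ p ∈ K, S - 1/(n+1) < Φ p := by
    intro n
    have hlt : S - 1/(n+1) < S := by
      have h1 : (0:ℝ) < 1/(n+1) := by positivity
      linarith
    obtain ⟨y, hy, hy'⟩ := exists_lt_of_lt_csSup (hKne.image Φ) hlt
    obtain ⟨pp, hp, rfl⟩ := hy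
    exact ⟨pp, hp, hy'⟩
  choose p hpK hpΦ using hseq
  have hKcomp : IsCompact K := by
    rw [hKdef]
    exact isCompact_Icc.prod (isCompact_closedBall (0:ℂ) ρ)
  obtain ⟨q, hqK, φn, hφmono, hφlim⟩ := hKcomp.tendsto_subseq hpK
  have hs₀t : q.1 ∈ Icc (0:ℝ) t := hqK.1
  have hz₀ρ' : q.2 ∈ Metric.closedBall (0:ℂ) ρ := hqK.2
  have hs₀T : q.1 ∈ Icc (0:ℝ) T := ⟨hs₀t.1, le_trans hs₀t.2 ht.2⟩
  obtain ⟨_, hz₀cb, hz₀ball, hz₀sq⟩ := hKfacts q hqK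
  have hfq₀ : 0 < a - (q.2.re^2 + q.2.im^2) := by linarith
  -- the limit inequality
  have hΨle : ∀ t' : ℝ, t' ∈ Icc (0:ℝ) T → (∀ᶠ n in Filter.atTop, (p (φn n)).1 ≤ t') →
      S ≤ w t' q.2 + C₀ * (t' - q.1) - hbar δ q.1 q.2 - ε * q.1 := by
    intro t' ht' hev
    have hlim1 : Tendsto (fun n : ℕ => S - 1/(φn n + 1)) atTop (𝓝 S) := by
      have h2 : Tendsto (fun n : ℕ => (1:ℝ)/(φn n + 1)) atTop (𝓝 0) :=
        tendsto_one_div_add_atTop_nhds_zero_nat.comp hφmono.tendsto_atTop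
      simpa using tendsto_const_nhds.sub h2
    have hcontw : ContinuousAt (w t') q.2 :=
      ((hw.smooth t' ht').continuousOn).continuousAt (Metric.isOpen_ball.mem_nhds hz₀ball)
    have hconth : ContinuousAt (fun qq : ℝ × ℂ => hbar δ qq.1 qq.2) q := by
      apply hbar_continuousAt
      · have := hs₀T.1; intro hcon; linarith
      · rw [← hadef]; exact ne_of_gt hfq₀
    have hcont : ContinuousAt (fun qq : ℝ × ℂ =>
        w t' qq.2 + C₀ * (t' - qq.1) - hbar δ qq.1 qq.2 - ε * qq.1) q := by
      refine (((hcontw.comp continuous_snd.continuousAt).add ?_).sub hconth).sub ?_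
      · fun_prop
      · fun_prop
    have hΨcont := hcont.tendsto.comp hφlim
    refine le_of_tendsto_of_tendsto hlim1 hΨcont ?_
    filter_upwards [hev] with n hn
    have hK' := hpK (φn n)
    obtain ⟨hsn, hzncb, hzn1, _⟩ := hKfacts _ hK'
    have hmono' := mono _ hzn1 _ hsn t' ht' hn
    have hΦn := hpΦ (φn n)
    simp only [hΦdef] at hΦn
    simp only [Function.comp]
    linarith
  have hkey : S ≤ Φ q := by
    rcases lt_or_eq_of_le hs₀T.2 with hlt | heq
    · have hall : ∀ t' ∈ Ioc q.1 T,
          S ≤ w t' q.2 + C₀ * (t' - q.1) - hbar δ q.1 q.2 - ε * q.1 := by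
        intro t' ht'
        apply hΨle t' ⟨le_trans hs₀T.1 ht'.1.le, ht'.2⟩
        have htend : Tendsto (fun n => (p (φn n)).1) atTop (𝓝 q.1) :=
          (continuous_fst.continuousAt.tendsto.comp hφlim)
        filter_upwards [htend.eventually (gt_mem_nhds ht'.1)] with n hn
        exact le_of_lt hn
      have hcw : ContinuousAt (fun s => w s q.2) q.1 :=
        (hw.pde q.1 hs₀T q.2 hz₀ball).continuousAt
      have hg : ContinuousAt (fun t' => w t' q.2 + C₀ * (t' - q.1)
          - hbar δ q.1 q.2 - ε * q.1) q.1 := by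
        refine ((hcw.add ?_).sub continuousAt_const).sub continuousAt_const
        fun_prop
      have hev' : ∀ᶠ t' in 𝓝[>] q.1, S ≤ w t' q.2 + C₀ * (t' - q.1)
          - hbar δ q.1 q.2 - ε * q.1 := by
        filter_upwards [Ioc_mem_nhdsGT_of_mem ⟨le_refl q.1, hlt⟩] with t' ht'
        exact hall t' ht'
      have hlim := ge_of_tendsto (hg.tendsto.mono_left
        (nhdsWithin_le_nhds (s := Ioi q.1))) hev'
      simp only [hΦdef]
      have hz0 : C₀ * (q.1 - q.1) = 0 := by ring
      linarith [hlim]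
    · have hev : ∀ᶠ n in Filter.atTop, (p (φn n)).1 ≤ T := by
        filter_upwards [] with n
        exact (hKfacts _ (hpK (φn n))).1.2
      have := hΨle T hTIcc hev
      rw [← heq] at this
      simp only [hΦdef]
      have hz : C₀ * (q.1 - q.1) = 0 := by ring
      linarith
  have hSΦq : 0 < Φ q := lt_of_lt_of_le hS hkey
  -- interior point
  have hz₀int : ‖q.2‖ < ρ := by
    rcases lt_or_eq_of_le (mem_closedBall_zero_iff.1 hz₀ρ') with h | h
    · exact h
    · exfalso
      have hsp := hsphere q.1 hs₀T q.2 h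
      have hwle := hM' q.1 hs₀T q.2 hz₀cb
      have hεs : 0 ≤ ε * q.1 := by nlinarith [hs₀T.1]
      simp only [hΦdef] at hSΦq
      linarith
  -- local max in space
  have hbeq : ∀ z : ℂ, hbar δ q.1 z = Real.log (2*(1-δ))
      - Real.log (a - (z.re^2 + z.im^2)) + (1/2)*Real.log (2*q.1+1) := by
    intro z; simp only [hbar, hadef]
  have hlocmax : IsLocalMax (fun z : ℂ => w q.1 z - (Real.log (2*(1-δ))
      - Real.log (a - (z.re^2 + z.im^2)) + (1/2)*Real.log (2*q.1+1))) q.2 := by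
    have hball : Metric.ball (0:ℂ) ρ ∈ 𝓝 q.2 :=
      Metric.isOpen_ball.mem_nhds (mem_ball_zero_iff.2 hz₀int)
    filter_upwards [hball] with z hz
    have hzK : (q.1, z) ∈ K := ⟨hs₀t, Metric.ball_subset_closedBall hz⟩
    have h1 : Φ (q.1, z) ≤ S := le_csSup hbddA (mem_image_of_mem _ hzK)
    simp only [hΦdef] at h1 hkey
    simp only [← hbeq]
    linarith
  have hQlt : q.2.re^2 + q.2.im^2 < a := by linarith
  have hlapb : lap (w q.1) q.2 ≤ 4*a/(a - (q.2.re^2 + q.2.im^2))^2 :=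
    lap_le_of_isLocalMax (hw.smooth q.1 hs₀T) hz₀ball hQlt hlocmax
  rcases eq_or_lt_of_le hs₀T.1 with h0 | h0
  · -- elliptic case : q.1 = 0
    have hlapu : lap u₀ q.2 = lap (w 0) q.2 :=
      (lap_congr Metric.isOpen_ball hz₀ball hinit).symm
    have hg := hKu₀ q.2 hz₀ball
    simp only [gauss] at hg
    have hexp1 : Real.exp (-2*u₀ q.2) * Real.exp (2*u₀ q.2) = 1 := by
      rw [← Real.exp_add]; norm_num
    have hlapge : Real.exp (2*u₀ q.2) ≤ lap u₀ q.2 := by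
      nlinarith [Real.exp_pos (-2*u₀ q.2), Real.exp_pos (2*u₀ q.2)]
    have hfq' : 0 < (1-δ)^2 - (q.2.re^2 + q.2.im^2) := by rw [hadef] at hfq₀; exact hfq₀
    have hbex := hbar_exp (δ := δ) (t := 0) (z := q.2) hδ1 hfq' (le_refl 0)
    rw [← hadef] at hbex
    have hlap0 : lap (w 0) q.2 ≤ 4*a/(a - (q.2.re^2 + q.2.im^2))^2 := by
      rw [h0]; exact hlapb
    have hchain : Real.exp (2*u₀ q.2) ≤ Real.exp (2*hbar δ 0 q.2) := by
      rw [hbex]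
      have : 4*a*(2*0+1)/(a - (q.2.re^2 + q.2.im^2))^2
          = 4*a/(a - (q.2.re^2 + q.2.im^2))^2 := by norm_num
      rw [this]
      linarith [hlapu, hlapge, hlap0]
    have hu₀le : u₀ q.2 ≤ hbar δ 0 q.2 := by
      have := Real.exp_le_exp.1 hchain
      linarith
    have hw0 : w 0 q.2 = u₀ q.2 := hinit q.2 hz₀ball
    simp only [hΦdef, ← h0] at hSΦq
    rw [hw0] at hSΦq
    linarith
  · -- parabolic case : 0 < q.1
    have hgt : hbar δ q.1 q.2 < w q.1 q.2 := by
      simp only [hΦdef] at hSΦq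
      nlinarith [hs₀T.1]
    have hder : HasDerivAt (fun s => w s q.2 - hbar δ s q.2 - ε*s)
        (Real.exp (-2 * w q.1 q.2) * lap (w q.1) q.2 - 1/(2*q.1+1) - ε) q.1 := by
      have h1 := hw.pde q.1 hs₀T q.2 hz₀ball
      have h2 := hbar_hasDerivAt_t (δ := δ) q.2 hs₀T.1
      have h3 : HasDerivAt (fun s : ℝ => ε*s) ε q.1 := by
        simpa using (hasDerivAt_id q.1).const_mul ε
      exact (h1.sub h2).sub h3
    have hmax' : ∀ s ∈ Icc (0:ℝ) q.1,
        (fun s => w s q.2 - hbar δ s q.2 - ε*s) s ≤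
        (fun s => w s q.2 - hbar δ s q.2 - ε*s) q.1 := by
      intro s hs
      have hsK : (s, q.2) ∈ K := ⟨⟨hs.1, le_trans hs.2 hs₀t.2⟩, hz₀ρ'⟩
      have h1 := le_csSup hbddA (mem_image_of_mem Φ hsK)
      simp only [hΦdef] at h1 hkey ⊢
      linarith
    have hd0 := deriv_nonneg_of_isMaxOn_left h0 hder hmax'
    have hspos : 0 < 2*q.1+1 := by linarith
    have hdwle : Real.exp (-2 * w q.1 q.2) * lap (w q.1) q.2 ≤ 1/(2*q.1+1) := by
      rcases le_or_gt (lap (w q.1) q.2) 0 with hl | hl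
      · have h1 : Real.exp (-2 * w q.1 q.2) * lap (w q.1) q.2 ≤ 0 := by
          nlinarith [Real.exp_pos (-2 * w q.1 q.2)]
        have h2 : 0 < 1/(2*q.1+1) := by positivity
        linarith
      · have hA : 0 < 4*a/(a - (q.2.re^2 + q.2.im^2))^2 := by positivity
        have hexple : Real.exp (-2 * w q.1 q.2) ≤ Real.exp (-2 * hbar δ q.1 q.2) :=
          Real.exp_le_exp.2 (by linarith)
        have hfq' : 0 < (1-δ)^2 - (q.2.re^2 + q.2.im^2) := by
          rw [hadef] at hfq₀; exact hfq₀
        have hident := hbar_exp_neg (δ := δ) (t := q.1) (z := q.2) hδ1 hfq' hs₀T.1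
        rw [← hadef] at hident
        calc Real.exp (-2 * w q.1 q.2) * lap (w q.1) q.2
            ≤ Real.exp (-2 * w q.1 q.2) * (4*a/(a - (q.2.re^2 + q.2.im^2))^2) := by
              nlinarith [Real.exp_pos (-2 * w q.1 q.2)]
          _ ≤ Real.exp (-2 * hbar δ q.1 q.2) * (4*a/(a - (q.2.re^2 + q.2.im^2))^2) := by
              nlinarith
          _ = 1/(2*q.1+1) := hident
    linarith



/-- Upper bound for the conformal factor of an admissible Ricci flow on the
unit disc starting at a metric with `K[u₀] ≤ −1`:
`w(t,x) ≤ ln(2/(1−|x|²)) + ½ ln(2t+1)` for `t ∈ [0,T]`. -/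
theorem admissible_flow_conformal_factor_upper_bound
    (T : ℝ) (hT : 0 < T) (w : ℝ → ℂ → ℝ)
    (hw : AdmissibleRicciFlow T w)
    (u₀ : ℂ → ℝ) (hinit : ∀ x ∈ Metric.ball (0:ℂ) 1, w 0 x = u₀ x)
    (hKu₀ : ∀ x ∈ Metric.ball (0:ℂ) 1, gauss u₀ x ≤ -1) :
    ∀ t ∈ Set.Icc (0:ℝ) T, ∀ x ∈ Metric.ball (0:ℂ) 1,
      w t x ≤ Real.log (2 / (1 - ‖x‖ ^ 2)) + (1/2) * Real.log (2 * t + 1) := by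
  intro t ht x hx
  have hx1 : ‖x‖ < 1 := mem_ball_zero_iff.1 hx
  have hxnn : (0:ℝ) ≤ ‖x‖ := norm_nonneg x
  have h1x : 0 < 1 - ‖x‖^2 := by nlinarith
  have hδstep : ∀ δ ∈ Ioo (0:ℝ) (1 - ‖x‖), w t x ≤ hbar δ t x := by
    intro δ hδ
    have hδx : ‖x‖ < 1 - δ := by have := hδ.2; linarith
    refine le_of_forall_pos_le_add ?_
    intro η hη
    have hε : 0 < η/(t+1) := by
      have := ht.1; positivity
    have hcore := core T w hw u₀ hinit hKu₀ ht hδ.1 hδx hε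
    have hteta : η/(t+1) * t ≤ η := by
      rw [div_mul_eq_mul_div, div_le_iff₀ (by linarith [ht.1])]
      nlinarith [ht.1]
    linarith
  have h0val : hbar 0 t x =
      Real.log 2 - Real.log (1 - ‖x‖^2) + (1/2)*Real.log (2*t+1) := by
    have hq := norm_sq_complex x
    simp only [hbar, hq]
    norm_num
  have hc : ContinuousAt (fun δ => hbar δ t x) 0 := by
    unfold hbar
    refine (ContinuousAt.sub ?_ ?_).add continuousAt_const
    · exact ContinuousAt.log (by fun_prop) (by norm_num)
    · refine ContinuousAt.log (by fun_prop) ?_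
      have : x.re^2 + x.im^2 = ‖x‖^2 := norm_sq_complex x
      simp only [this]
      intro hcon
      nlinarith
  have hlim : Tendsto (fun δ => hbar δ t x) (𝓝[>] (0:ℝ))
      (𝓝 (Real.log 2 - Real.log (1 - ‖x‖^2) + (1/2)*Real.log (2*t+1))) := by
    rw [← h0val]
    exact hc.tendsto.mono_left (nhdsWithin_le_nhds (s := Ioi (0:ℝ)))
  have hfinal : w t x ≤ Real.log 2 - Real.log (1 - ‖x‖^2) + (1/2)*Real.log (2*t+1) := by
    refine ge_of_tendsto hlim ?_
    filter_upwards [Ioo_mem_nhdsGT_of_mem ⟨le_refl (0:ℝ),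
      (by linarith : (0:ℝ) < 1 - ‖x‖)⟩] with δ hδ
    exact hδstep δ hδ
  rw [Real.log_div (by norm_num) (ne_of_gt h1x)]
  linarith
end

section
/- Suppose w(p) > 0 and ε ∈ (0,1) satisfies ε < (e^{w(p)} − e^{-w(p)})/(1 + e^{w(p)}). Let q be a point with w(q) ≥ w(p), Δ w̃(q) < ε, and |∇w̃(q)|² < ε, where w̃ := −e^{-w} and w satisfies the differential inequality Δw ≥ e^{2w} − 1 (coming from curvature bounds K[g₂] ≤ −1 ≤ K[g₁] via Δ_{g₁} w = −e^{2w} K[g₂]∘f + K[g₁]). Then one reaches a contradiction; that is, there is no such ε, and hence w ≤ 0 everywhere. Concretely: from Δ w̃ = e^{-w} Δw − e^{w}|∇w̃|², the hypotheses imply ε > e^{w(p)}(1−ε) − e^{-w(p)}, contradicting the choice of ε. -/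
noncomputable def grad2 (f : ℂ → ℝ) (z : ℂ) : ℝ :=
  (deriv (fun r : ℝ => f ⟨r, z.im⟩) z.re) ^ 2 +
  (deriv (fun s : ℝ => f ⟨z.re, s⟩) z.im) ^ 2

lemma aux_deriv1 {g : ℝ → ℝ} {S : Set ℝ} (hS : IsOpen S) (hg : ContDiffOn ℝ 2 g S)
    {r : ℝ} (hr : r ∈ S) :
    deriv (fun x => -Real.exp (-g x)) r = Real.exp (-g r) * deriv g r := by
  have hgd : DifferentiableAt ℝ g r :=
    (hg.differentiableOn (by norm_num)).differentiableAt (hS.mem_nhds hr)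
  have h : HasDerivAt (fun x => -Real.exp (-g x)) (Real.exp (-g r) * deriv g r) r := by
    have := ((Real.hasDerivAt_exp (-g r)).comp r (hgd.hasDerivAt.neg)).neg
    simpa [mul_comm, mul_left_comm, neg_mul, Function.comp_def, Pi.neg_def] using this
  exact h.deriv

lemma aux_deriv2 {g : ℝ → ℝ} {S : Set ℝ} (hS : IsOpen S) (hg : ContDiffOn ℝ 2 g S)
    {r : ℝ} (hr : r ∈ S) :
    deriv (deriv (fun x => -Real.exp (-g x))) r =
      Real.exp (-g r) * deriv (deriv g) r - Real.exp (-g r) * (deriv g r) ^ 2 := by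
  have hEq : deriv (fun x => -Real.exp (-g x)) =ᶠ[nhds r]
      fun x => Real.exp (-g x) * deriv g x := by
    filter_upwards [hS.mem_nhds hr] with x hx
    exact aux_deriv1 hS hg hx
  rw [hEq.deriv_eq]
  have hgd : DifferentiableAt ℝ g r :=
    (hg.differentiableOn (by norm_num)).differentiableAt (hS.mem_nhds hr)
  have hg' : DifferentiableAt ℝ (deriv g) r := by
    have h1 : ContDiffOn ℝ 1 (deriv g) S := hg.deriv_of_isOpen hS (by norm_num)
    exact (h1.differentiableOn (by norm_num)).differentiableAt (hS.mem_nhds hr)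
  have h1 : HasDerivAt (fun x => Real.exp (-g x)) (-Real.exp (-g r) * deriv g r) r := by
    have := (Real.hasDerivAt_exp (-g r)).comp r (hgd.hasDerivAt.neg)
    simpa [mul_comm, neg_mul, Function.comp_def] using this
  have := h1.mul hg'.hasDerivAt
  rw [HasDerivAt.deriv (f := fun x => Real.exp (-g x) * deriv g x) this]
  ring


/-- The key pointwise contradiction in the proof of Yau's Schwarz lemma, in a
conformal coordinate where `g₁ = e^{2φ}|dz|²` (so `Δ_{g₁} = e^{-2φ}Δ` and
`|∇h|²_{g₁} = e^{-2φ}|∇h|²`).  Suppose `w` satisfies `Δ_{g₁}w ≥ e^{2w} − 1`,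
`w(p) > 0`, `ε ∈ (0,1)` with `ε < (e^{w(p)} − e^{-w(p)})/(1 + e^{w(p)})`, and
`q` satisfies `w(q) ≥ w(p)`, `Δ_{g₁}w̃(q) < ε` and `|∇w̃(q)|²_{g₁} < ε`, where
`w̃ = −e^{-w}`.  Then we have a contradiction. -/
theorem yau_schwarz_pointwise_contradiction
    (U : Set ℂ) (hUopen : IsOpen U)
    (φ w : ℂ → ℝ)
    (hφ : ContDiffOn ℝ (⊤ : ℕ∞) φ U) (hw : ContDiffOn ℝ 2 w U)
    (hineq : ∀ x ∈ U, Real.exp (2 * w x) - 1 ≤ Real.exp (-2 * φ x) * lap w x)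
    (p : ℂ) (hp : p ∈ U) (hwp : 0 < w p)
    (ε : ℝ) (hε0 : 0 < ε) (hε1 : ε < 1)
    (hεchoice : ε < (Real.exp (w p) - Real.exp (-w p)) / (1 + Real.exp (w p)))
    (q : ℂ) (hq : q ∈ U) (hwq : w p ≤ w q)
    (hlap : Real.exp (-2 * φ q) * lap (fun x => -Real.exp (-w x)) q < ε)
    (hgrad : Real.exp (-2 * φ q) * grad2 (fun x => -Real.exp (-w x)) q < ε) :
    False := by
  -- horizontal and vertical line functions
  set gx : ℝ → ℝ := fun r => w ⟨r, q.im⟩ with hgx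
  set gy : ℝ → ℝ := fun s => w ⟨q.re, s⟩ with hgy
  have hLx : ContDiff ℝ 2 (fun r : ℝ => (⟨r, q.im⟩ : ℂ)) := by
    have : (fun r : ℝ => (⟨r, q.im⟩ : ℂ)) = fun r : ℝ => (r : ℂ) + q.im * Complex.I := by
      funext r; rw [Complex.mk_eq_add_mul_I]
    rw [this]
    exact Complex.ofRealCLM.contDiff.add contDiff_const
  have hLy : ContDiff ℝ 2 (fun s : ℝ => (⟨q.re, s⟩ : ℂ)) := by
    have : (fun s : ℝ => (⟨q.re, s⟩ : ℂ)) = fun s : ℝ => (q.re : ℂ) + s * Complex.I := by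
      funext s; rw [Complex.mk_eq_add_mul_I]
    rw [this]
    exact contDiff_const.add (Complex.ofRealCLM.contDiff.mul contDiff_const)
  set Sx : Set ℝ := (fun r : ℝ => (⟨r, q.im⟩ : ℂ)) ⁻¹' U with hSx
  set Sy : Set ℝ := (fun s : ℝ => (⟨q.re, s⟩ : ℂ)) ⁻¹' U with hSy
  have hSxo : IsOpen Sx := hUopen.preimage hLx.continuous
  have hSyo : IsOpen Sy := hUopen.preimage hLy.continuous
  have hgxc : ContDiffOn ℝ 2 gx Sx :=
    hw.comp hLx.contDiffOn (fun r hr => hr)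
  have hgyc : ContDiffOn ℝ 2 gy Sy :=
    hw.comp hLy.contDiffOn (fun s hs => hs)
  have hqx : q.re ∈ Sx := by simpa [hSx] using hq
  have hqy : q.im ∈ Sy := by simpa [hSy] using hq
  have key : (⟨q.re, q.im⟩ : ℂ) = q := Complex.ext rfl rfl
  -- laplacian identity
  have hlap_eq : lap (fun x => -Real.exp (-w x)) q =
      Real.exp (-w q) * lap w q - Real.exp (-w q) * grad2 w q := by
    have hx := aux_deriv2 hSxo hgxc hqx
    have hy := aux_deriv2 hSyo hgyc hqy
    simp only [hgx, key] at hx hy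
    simp only [lap, grad2]
    rw [hx, hy]
    ring
  have hgrad_eq : grad2 (fun x => -Real.exp (-w x)) q =
      Real.exp (-2 * w q) * grad2 w q := by
    have hx := aux_deriv1 hSxo hgxc hqx
    have hy := aux_deriv1 hSyo hgyc hqy
    simp only [hgx, key] at hx hy
    simp only [grad2]
    rw [hx, hy]
    rw [show (-2 : ℝ) * w q = -w q + -w q by ring, Real.exp_add]
    ring
  -- arithmetic
  set A := Real.exp (-2 * φ q) with hA
  have hApos : 0 < A := Real.exp_pos _
  have hE : 0 < Real.exp (w q) := Real.exp_pos _
  have hE' : Real.exp (-w q) = (Real.exp (w q))⁻¹ := by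
    rw [Real.exp_neg]
  have hE2 : Real.exp (2 * w q) = Real.exp (w q) * Real.exp (w q) := by
    rw [two_mul, Real.exp_add]
  have hE2' : Real.exp (-2 * w q) = Real.exp (-w q) * Real.exp (-w q) := by
    rw [show (-2:ℝ) * w q = -w q + -w q by ring, Real.exp_add]
  have hiq := hineq q hq
  rw [hlap_eq] at hlap
  rw [hgrad_eq] at hgrad
  -- ε(1 + e^{wq}) > e^{wq} - e^{-wq}
  have h1 : Real.exp (w q) - Real.exp (-w q) < ε * (1 + Real.exp (w q)) := by
    have hEneg : 0 < Real.exp (-w q) := Real.exp_pos _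
    have hone : Real.exp (-w q) * Real.exp (w q) = 1 := by
      rw [← Real.exp_add]; simp
    have t1 : Real.exp (-w q) * (Real.exp (2 * w q) - 1)
        ≤ Real.exp (-w q) * (A * lap w q) :=
      mul_le_mul_of_nonneg_left hiq hEneg.le
    have t2 : Real.exp (-w q) * (Real.exp (2 * w q) - 1)
        = Real.exp (w q) - Real.exp (-w q) := by
      rw [hE2]; linear_combination Real.exp (w q) * hone
    have t3 : Real.exp (w q) * (A * (Real.exp (-2 * w q) * grad2 w q))
        < Real.exp (w q) * ε := by
      exact (mul_lt_mul_iff_right₀ hE).2 hgrad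
    have t4 : Real.exp (w q) * (A * (Real.exp (-2 * w q) * grad2 w q))
        = A * (Real.exp (-w q) * grad2 w q) := by
      rw [hE2']; linear_combination (A * Real.exp (-w q) * grad2 w q) * hone
    nlinarith [t1, t2, t3, t4, hlap]
  -- ε < 1 - e^{-wp} ≤ 1 - e^{-wq}
  have hmono : Real.exp (-w q) ≤ Real.exp (-w p) := Real.exp_le_exp.2 (by linarith)
  have hEp : 0 < Real.exp (w p) := Real.exp_pos _
  have hEp' : Real.exp (-w p) * Real.exp (w p) = 1 := by
    rw [← Real.exp_add]; simp
  have h2 : ε < 1 - Real.exp (-w p) := by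
    have hnum : Real.exp (w p) - Real.exp (-w p)
        = (1 - Real.exp (-w p)) * (1 + Real.exp (w p)) := by
      linear_combination hEp'
    rw [hnum, mul_div_cancel_right₀ _ (by positivity : (1:ℝ) + Real.exp (w p) ≠ 0)] at hεchoice
    exact hεchoice
  have hEq1 : Real.exp (-w q) * Real.exp (w q) = 1 := by
    rw [← Real.exp_add]; simp
  nlinarith [h1, h2, hmono, hE, hEq1]
end
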